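/- Let A = [[√2, 1/2],[1/2, √2]] and C² have (1,1) entry 16/9 (where C = |(1/3)[[4, 2√2],[0,5]]|). Then there exists a positive real t such that the inequality A ≤ (1/(2t)) C² + (t/2)·I fails; specifically √2 > 8/(9t) + t/2 for t = 4/3. -/

import Mathlib

open Matrix
open scoped ComplexOrder

noncomputable def matA : Matrix (Fin 2) (Fin 2) ℂ :=
  !![(Real.sqrt 2 : ℂ), 1/2; 1/2, (Real.sqrt 2 : ℂ)]

noncomputable def matY : Matrix (Fin 2) (Fin 2) ℂ :=
  (3 : ℂ)⁻¹ • !![4, (2 * Real.sqrt 2 : ℂ); 0, 5]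

/-- `C² = Yᴴ Y` where `C = |Y|`. -/
noncomputable def matCsq : Matrix (Fin 2) (Fin 2) ℂ := matYᴴ * matY

/-! A positive semidefinite matrix has nonnegative diagonal entries, so it suffices to look at the
`(1,1)` entry `(1/(2t))·16/9 + t/2 - √2 = 8/(9t) + t/2 - √2`; at `t = 4/3` this is `4/3 - √2 < 0`. -/

lemma matCsq_zero_zero : matCsq 0 0 = 16 / 9 := by
  simp only [matCsq, matY, mul_apply, Fin.sum_univ_two, conjTranspose_smul, conjTranspose_apply,
    Matrix.smul_apply, of_apply, cons_val', cons_val_zero, cons_val_fin_one, star_inv₀, star_ofNat,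
    smul_eq_mul]
  norm_num

lemma four_thirds_lt_sqrt_two : (4 / 3 : ℝ) < √2 :=
  Real.lt_sqrt_of_sq_lt (by norm_num)

lemma compressed_bound_zero_zero (t : ℝ) :
    (((1 / (2 * t) : ℂ) • matCsq + ((t / 2 : ℝ) : ℂ) • (1 : Matrix (Fin 2) (Fin 2) ℂ))
        - matA) 0 0 = ((8 / (9 * t) + t / 2 - √2 : ℝ) : ℂ) := by
  simp only [Matrix.sub_apply, Matrix.add_apply, Matrix.smul_apply, one_apply_eq, matCsq_zero_zero,
    matA, of_apply, cons_val', cons_val_zero, empty_val', cons_val_fin_one, smul_eq_mul, mul_one]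
  push_cast
  ring

lemma not_posSemidef_of_lt_sqrt_two {t : ℝ} (h : 8 / (9 * t) + t / 2 < √2) :
    ¬ (((1 / (2 * t) : ℂ) • matCsq + ((t / 2 : ℝ) : ℂ) • (1 : Matrix (Fin 2) (Fin 2) ℂ))
        - matA).PosSemidef := by
  intro hpsd
  have hdiag := hpsd.diag_nonneg (i := 0)
  rw [compressed_bound_zero_zero, Complex.zero_le_real] at hdiag
  linarith

theorem stmt12 :
    matCsq 0 0 = (16 / 9 : ℂ) ∧
      (∃ t : ℝ, 0 < t ∧
        ¬ (((1 / (2 * t) : ℂ) • matCsq + ((t / 2 : ℝ) : ℂ) • (1 : Matrix (Fin 2) (Fin 2) ℂ))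
            - matA).PosSemidef) ∧
      Real.sqrt 2 > 8 / (9 * (4 / 3 : ℝ)) + (4 / 3 : ℝ) / 2 := by
  have hlt : 8 / (9 * (4 / 3 : ℝ)) + (4 / 3 : ℝ) / 2 < √2 := by
    norm_num
    exact four_thirds_lt_sqrt_two
  exact ⟨matCsq_zero_zero, ⟨4 / 3, by norm_num, not_posSemidef_of_lt_sqrt_two hlt⟩, hlt⟩
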